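/- Assume in addition the Semmes-type Poincaré inequality on Euclidean balls: there is C₀ > 0 such that for every Euclidean ball B = B(x,r) and every continuously differentiable u : ℝⁿ → ℝ, ∫_B (1/μ(B)) ∫_B |u(z) − u(y)| dμ(y) dμ(z) ≤ C₀ μ(B)^{1/n} ∫_{2B} ω(z)^{−1/n} ‖∇u(z)‖ dμ(z). Then there exist constants C' > 0 and C₂ ≥ 1, independent of x, r and u, such that for every x ∈ ℝⁿ, every r > 0, and every continuously differentiable u : ℝⁿ → ℝ, inf_{c ∈ ℝ} ∫_{B^d(x,r)} |u − c| dμ ≤ C' r ∫_{B^d(x, C₂ r)} ω(z)^{−1/n} ‖∇u(z)‖ dμ(z). In other words, the metric measure space (ℝⁿ, d, μ) supports a (1,1)-Poincaré inequality with the metric-ball Poincaré constant independent of the ball. -/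

import Mathlib

/-!
Fix a metric ball `B^d(x, r)`. Doubling lets us choose a Euclidean radius `s` with
`μ(B(x, s)) < C rⁿ ≤ μ(B(x, 2s))` (small balls have small measure since `μ` has no atoms, and
reverse doubling makes `μ(B(x, t))` unbounded). The comparison `d(x, y)ⁿ ≈ μ(B(x, |x - y|))`
then gives `B^d(x, r) ⊆ B(x, 4s)`, while `μ(B(x, 8s)) ≤ C_d³ C rⁿ` gives
`B(x, 8s) ⊆ B^d(x, (C² C_d³ + 1) r)`. Taking `c` to be the mean of `u` over `B(x, 4s)`, the
Semmes inequality on that ball, with `μ(B(x, 4s))^(1/n) ≤ C_d² C r`, bounds the oscillation of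
`u` on the metric ball.
-/

open MeasureTheory Metric Filter
open scoped Topology ENNReal

theorem Monotone.exists_lt_le_two_mul {α : Type*} [LinearOrder α] {f : ℝ → α}
    (hf : Monotone f) {L : α} {t₀ t₁ : ℝ} (ht₀ : 0 < t₀) (h₀ : f t₀ < L)
    (h₁ : L ≤ f t₁) :
    ∃ s, 0 < s ∧ f s < L ∧ L ≤ f (2 * s) := by
  classical
  have hex : ∃ k : ℕ, L ≤ f (2 ^ k * t₀) := by
    obtain ⟨k, hk⟩ := pow_unbounded_of_one_lt (t₁ / t₀) one_lt_two
    exact ⟨k, h₁.trans (hf ((div_lt_iff₀ ht₀).1 hk).le)⟩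
  obtain ⟨j, hj⟩ : ∃ j, Nat.find hex = j + 1 :=
    Nat.exists_eq_succ_of_ne_zero fun h => h₀.not_ge (by simpa [h] using Nat.find_spec hex)
  refine ⟨2 ^ j * t₀, by positivity, not_le.1 (Nat.find_min hex (by omega)), ?_⟩
  simpa [hj, pow_succ', mul_assoc] using Nat.find_spec hex

theorem Real.rpow_one_div_mul_pow_le {a r : ℝ} {n : ℕ} (ha : 1 ≤ a) (hr : 0 ≤ r)
    (hn : n ≠ 0) : (a * r ^ n) ^ ((1 : ℝ) / n) ≤ a * r := by
  rw [Real.mul_rpow (by positivity) (by positivity), one_div, Real.pow_rpow_inv_natCast hr hn]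
  gcongr
  exact Real.rpow_le_self_of_one_le ha (inv_le_one_of_one_le₀ (Nat.one_le_cast.2 (by omega)))

section BallMeasure

def IsDoublingWith {X : Type*} [PseudoMetricSpace X] [MeasurableSpace X] (μ : Measure X)
    (K : ℝ≥0∞) : Prop :=
  ∀ (x : X) (r : ℝ), 0 < r → μ (ball x (2 * r)) ≤ K * μ (ball x r)

theorem exists_pos_measure_ball_lt {X : Type*} [MetricSpace X] [MeasurableSpace X]
    [OpensMeasurableSpace X] {μ : Measure X} [NullSingletonClass μ]
    (x : X) (hx : μ (ball x 1) ≠ ⊤) {L : ℝ≥0∞} (hL : L ≠ 0) :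
    ∃ t, 0 < t ∧ μ (ball x t) < L := by
  have h := tendsto_measure_biInter_gt (μ := μ) (s := ball x) (a := 0)
    (fun _ _ => measurableSet_ball.nullMeasurableSet) (fun _ _ _ hij => ball_subset_ball hij)
    ⟨1, one_pos, hx⟩
  rw [biInter_gt_ball, closedBall_zero, measure_singleton] at h
  obtain ⟨t, ht, ht0⟩ :=
    ((h.eventually (gt_mem_nhds (pos_iff_ne_zero.2 hL))).and self_mem_nhdsWithin).exists
  exact ⟨t, ht0, ht⟩

theorem measure_ball_two_pow_mul_le {X : Type*} [PseudoMetricSpace X] [MeasurableSpace X]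
    {μ : Measure X} {K : ℝ≥0∞} (hdoub : IsDoublingWith μ K) (x : X) {r : ℝ} (hr : 0 < r)
    (k : ℕ) :
    μ (ball x (2 ^ k * r)) ≤ K ^ k * μ (ball x r) := by
  induction k with
  | zero => simp
  | succ k ih =>
    calc μ (ball x (2 ^ (k + 1) * r)) = μ (ball x (2 * (2 ^ k * r))) := by
          rw [pow_succ', mul_assoc]
      _ ≤ K * μ (ball x (2 ^ k * r)) := hdoub x _ (by positivity)
      _ ≤ K * (K ^ k * μ (ball x r)) := by gcongr
      _ = K ^ (k + 1) * μ (ball x r) := by ring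

variable {E : Type*} [NormedAddCommGroup E] [NormedSpace ℝ E] [MeasurableSpace E]
  [OpensMeasurableSpace E] {μ : Measure E} {K : ℝ≥0∞}

/- For `y = x + v` with `‖v‖ = 3s/2`, the ball `B(y, s/2)` lies in `B(x, 2s) \ B(x, s)` and
its third doubling `B(y, 4s)` covers `B(x, s)`. -/
theorem one_add_inv_pow_three_mul_measure_ball_le [Nontrivial E] (hdoub : IsDoublingWith μ K)
    (x : E) {s : ℝ} (hs : 0 < s) :
    (1 + (K ^ 3)⁻¹) * μ (ball x s) ≤ μ (ball x (2 * s)) := by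
  obtain ⟨v, hv⟩ := exists_norm_eq E (by positivity : (0 : ℝ) ≤ 3 * s / 2)
  have hxy : dist x (x + v) = 3 * s / 2 := by
    rw [dist_comm, dist_eq_norm, add_sub_cancel_left, hv]
  have hcover : μ (ball x s) ≤ K ^ 3 * μ (ball (x + v) (s / 2)) :=
    (measure_mono (ball_subset_ball' (ε₂ := 2 ^ 3 * (s / 2)) (by rw [hxy]; linarith))).trans
      (measure_ball_two_pow_mul_le hdoub (x + v) (by positivity) 3)
  have hunion : μ (ball x s) + μ (ball (x + v) (s / 2)) ≤ μ (ball x (2 * s)) := by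
    rw [← measure_union (ball_disjoint_ball (by rw [hxy]; linarith)) measurableSet_ball]
    refine measure_mono (Set.union_subset (ball_subset_ball (by linarith)) ?_)
    exact ball_subset_ball' (by rw [dist_comm, hxy]; linarith)
  calc (1 + (K ^ 3)⁻¹) * μ (ball x s) = μ (ball x s) + μ (ball x s) / K ^ 3 := by
        rw [add_mul, one_mul, mul_comm, div_eq_mul_inv]
    _ ≤ μ (ball x s) + μ (ball (x + v) (s / 2)) := by
        gcongr; exact ENNReal.div_le_of_le_mul' hcover
    _ ≤ μ (ball x (2 * s)) := hunion

theorem exists_le_measure_ball [Nontrivial E] (hdoub : IsDoublingWith μ K)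
    (hK : K ≠ ⊤) (x : E) (hx : μ (ball x 1) ≠ 0) {L : ℝ≥0∞} (hL : L ≠ ⊤) :
    ∃ t, 0 < t ∧ L ≤ μ (ball x t) := by
  set q := 1 + (K ^ 3)⁻¹
  have hq : 1 < q := ENNReal.lt_add_right ENNReal.one_ne_top
    (ENNReal.inv_ne_zero.2 (ENNReal.pow_ne_top hK))
  have hgrow : ∀ k : ℕ, q ^ k * μ (ball x 1) ≤ μ (ball x (2 ^ k)) := by
    intro k
    induction k with
    | zero => simp
    | succ k ih =>
      calc q ^ (k + 1) * μ (ball x 1) = q * (q ^ k * μ (ball x 1)) := by ring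
        _ ≤ q * μ (ball x (2 ^ k)) := by gcongr
        _ ≤ μ (ball x (2 * 2 ^ k)) :=
          one_add_inv_pow_three_mul_measure_ball_le hdoub x (by positivity)
        _ = μ (ball x (2 ^ (k + 1))) := by rw [pow_succ']
  have htendsto : Tendsto (fun k : ℕ => q ^ k * μ (ball x 1)) atTop (𝓝 ⊤) := by
    simpa only [ENNReal.top_mul hx] using
      ENNReal.Tendsto.mul_const (b := μ (ball x 1)) (ENNReal.tendsto_pow_atTop_nhds_top_iff.2 hq)
        (Or.inl ENNReal.top_ne_zero)
  obtain ⟨k, hk⟩ := (htendsto.eventually (lt_mem_nhds hL.lt_top)).exists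
  exact ⟨2 ^ k, by positivity, hk.le.trans (hgrow k)⟩

theorem exists_measure_ball_lt_le_measure_ball_two_mul [Nontrivial E] [NullSingletonClass μ]
    (hdoub : IsDoublingWith μ K) (hK : K ≠ ⊤) (x : E) (h0 : μ (ball x 1) ≠ 0)
    (htop : μ (ball x 1) ≠ ⊤) {L : ℝ≥0∞} (hL0 : L ≠ 0) (hL : L ≠ ⊤) :
    ∃ s, 0 < s ∧ μ (ball x s) < L ∧ L ≤ μ (ball x (2 * s)) := by
  obtain ⟨t₀, ht₀, h₀⟩ := exists_pos_measure_ball_lt x htop hL0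
  obtain ⟨t₁, -, h₁⟩ := exists_le_measure_ball hdoub hK x h0 hL
  exact Monotone.exists_lt_le_two_mul (fun _ _ h => measure_mono (ball_subset_ball h))
    ht₀ h₀ h₁

end BallMeasure

section Comparison

variable {X : Type*} [PseudoMetricSpace X] [ProperSpace X] [MeasurableSpace X] {μ : Measure X}
  [IsFiniteMeasureOnCompacts μ] {d : X → X → ℝ} {C : ℝ} {n : ℕ}

theorem setOf_lt_subset_closedBall (hd_pos : ∀ x y : X, x ≠ y → 0 < d x y)
    (hcomp : ∀ x y, C⁻¹ * μ.real (ball x (dist x y)) ≤ d x y ^ n) (hC : 0 < C)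
    (hn : n ≠ 0) {x : X} {ρ t : ℝ} (ht₀ : 0 ≤ t)
    (ht : ENNReal.ofReal (C * ρ ^ n) ≤ μ (ball x t)) :
    {y | d x y < ρ} ⊆ closedBall x t := by
  intro y hy
  by_contra hyt
  rw [mem_closedBall', not_le] at hyt
  have hxy : x ≠ y := by rintro rfl; simp at hyt; linarith
  have hρ : C * ρ ^ n ≤ μ.real (ball x (dist x y)) :=
    (ENNReal.ofReal_le_iff_le_toReal measure_ball_lt_top.ne).1
      (ht.trans (measure_mono (ball_subset_ball hyt.le)))
  have hρd : ρ ^ n ≤ d x y ^ n := by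
    refine le_trans ?_ (hcomp x y)
    rw [← inv_mul_cancel_left₀ hC.ne' (ρ ^ n)]
    gcongr
  exact (le_of_pow_le_pow_left₀ hn (hd_pos x y hxy).le hρd).not_gt hy

theorem ball_subset_setOf_lt (hcomp : ∀ x y, d x y ^ n ≤ C * μ.real (ball x (dist x y)))
    (hC : 0 ≤ C) {x : X} {ρ t : ℝ} (hρ : 0 ≤ ρ) (ht : C * μ.real (ball x t) < ρ ^ n) :
    ball x t ⊆ {y | d x y < ρ} := by
  intro y hy
  have hmono : μ.real (ball x (dist x y)) ≤ μ.real (ball x t) :=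
    measureReal_mono (ball_subset_ball (mem_ball'.1 hy).le) measure_ball_lt_top.ne
  exact lt_of_pow_lt_pow_left₀ n hρ
    ((hcomp x y).trans_lt ((mul_le_mul_of_nonneg_left hmono hC).trans_lt ht))

end Comparison

section MetricBalls

variable {E : Type*} [NormedAddCommGroup E] [NormedSpace ℝ E] [Nontrivial E] [ProperSpace E]
  [MeasurableSpace E] [OpensMeasurableSpace E] {μ : Measure E} [IsFiniteMeasureOnCompacts μ]
  {d : E → E → ℝ} {C : ℝ} {n : ℕ}

theorem isBounded_setOf_lt {K : ℝ≥0∞} (hdoub : IsDoublingWith μ K) (hK : K ≠ ⊤)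
    (hd_pos : ∀ x y : E, x ≠ y → 0 < d x y)
    (hcomp : ∀ x y, C⁻¹ * μ.real (ball x (dist x y)) ≤ d x y ^ n) (hC : 0 < C)
    (hn : n ≠ 0) (x : E) (h0 : μ (ball x 1) ≠ 0) (ρ : ℝ) :
    Bornology.IsBounded {y | d x y < ρ} := by
  obtain ⟨t, ht, hLt⟩ := exists_le_measure_ball hdoub hK x h0 (L := .ofReal (C * ρ ^ n))
    ENNReal.ofReal_ne_top
  exact isBounded_closedBall.subset (setOf_lt_subset_closedBall hd_pos hcomp hC hn ht.le hLt)

theorem exists_ball_between_setOf_lt [NullSingletonClass μ] {Cd : ℝ} (hCd : 1 ≤ Cd)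
    (hC : 1 ≤ C) (hdoub : IsDoublingWith μ (ENNReal.ofReal Cd))
    (hd_pos : ∀ x y : E, x ≠ y → 0 < d x y)
    (hcomp : ∀ x y, C⁻¹ * μ.real (ball x (dist x y)) ≤ d x y ^ n ∧
      d x y ^ n ≤ C * μ.real (ball x (dist x y)))
    (hn : n ≠ 0) (x : E) (h0 : μ (ball x 1) ≠ 0) {r : ℝ} (hr : 0 < r) :
    ∃ R, 0 < R ∧ {y | d x y < r} ⊆ ball x R ∧
      ball x (2 * R) ⊆ {y | d x y < (C ^ 2 * Cd ^ 3 + 1) * r} ∧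
      μ.real (ball x R) ^ ((1 : ℝ) / n) ≤ Cd ^ 2 * C * r := by
  obtain ⟨s, hs, hs_lt, hs_ge⟩ := exists_measure_ball_lt_le_measure_ball_two_mul hdoub
    ENNReal.ofReal_ne_top x h0 measure_ball_lt_top.ne (L := .ofReal (C * r ^ n))
    (ENNReal.ofReal_pos.2 (by positivity)).ne' ENNReal.ofReal_ne_top
  have hball : ∀ k : ℕ, μ.real (ball x (2 ^ k * s)) ≤ Cd ^ k * (C * r ^ n) := fun k =>
    ENNReal.toReal_le_of_le_ofReal (by positivity) <|
      (measure_ball_two_pow_mul_le hdoub x hs k).trans <| by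
        rw [ENNReal.ofReal_mul (by positivity), ENNReal.ofReal_pow (by positivity)]
        gcongr
  refine ⟨2 ^ 2 * s, by positivity, ?_, ?_, ?_⟩
  · exact (setOf_lt_subset_closedBall hd_pos (fun x y => (hcomp x y).1) (by positivity) hn
      (by positivity) hs_ge).trans (closedBall_subset_ball (by linarith))
  · refine ball_subset_setOf_lt (fun x y => (hcomp x y).2) (by positivity) (by positivity) ?_
    calc C * μ.real (ball x (2 * (2 ^ 2 * s))) ≤ C * (Cd ^ 3 * (C * r ^ n)) := by
          rw [← mul_assoc, ← pow_succ']
          gcongr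
          exact hball 3
      _ < (C ^ 2 * Cd ^ 3 + 1) * r ^ n := by nlinarith [pow_pos hr n]
      _ ≤ ((C ^ 2 * Cd ^ 3 + 1) * r) ^ n := by
          rw [mul_pow]
          gcongr
          exact le_self_pow₀ (le_add_of_nonneg_left (by positivity)) hn
  · have hvol : μ.real (ball x (2 ^ 2 * s)) ≤ Cd ^ 2 * C * r ^ n := by
      simpa only [mul_assoc] using hball 2
    exact (Real.rpow_le_rpow measureReal_nonneg hvol (by positivity)).trans
      (Real.rpow_one_div_mul_pow_le (one_le_mul_of_one_le_of_one_le (one_le_pow₀ hCd) hC)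
        hr.le hn)

end MetricBalls

section Oscillation

theorem lipschitzWith_integral_abs_sub {α : Type*} [MeasurableSpace α] {ν : Measure α}
    [IsFiniteMeasure ν] {f : α → ℝ} (hf : Integrable f ν) :
    LipschitzWith (ν Set.univ).toNNReal fun a : ℝ => ∫ y, |a - f y| ∂ν := by
  have hint : ∀ a : ℝ, Integrable (fun y => |a - f y|) ν :=
    fun a => ((integrable_const a).sub hf).abs
  refine LipschitzWith.of_dist_le_mul fun a b => ?_
  rw [Real.dist_eq, Real.dist_eq, ← integral_sub (hint a) (hint b),
    ENNReal.coe_toNNReal_eq_toReal, ← measureReal_def, mul_comm]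
  have hbound : ∀ y, ‖|a - f y| - |b - f y|‖ ≤ |a - b| := fun y => by
    simpa using abs_abs_sub_abs_le_abs_sub (a - f y) (b - f y)
  simpa only [Real.norm_eq_abs] using norm_integral_le_of_norm_le_const (ae_of_all ν hbound)

theorem abs_sub_setAverage_le {α : Type*} [MeasurableSpace α] {μ : Measure α} {s : Set α}
    {f : α → ℝ} (hs0 : μ s ≠ 0) (hs : μ s ≠ ⊤) (hf : IntegrableOn f s μ) (a : ℝ) :
    |a - ⨍ y in s, f y ∂μ| ≤ (μ.real s)⁻¹ * ∫ y in s, |a - f y| ∂μ := by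
  have hpos : 0 < μ.real s := ENNReal.toReal_pos hs0 hs
  have hmean : ∫ y in s, (a - f y) ∂μ = μ.real s * (a - ⨍ y in s, f y ∂μ) := by
    rw [integral_sub (integrableOn_const hs : IntegrableOn (fun _ => a) s μ) hf,
      setIntegral_const, smul_eq_mul, ← measure_smul_setAverage _ hs, smul_eq_mul, mul_sub]
  rw [le_inv_mul_iff₀ hpos, ← abs_of_pos hpos, ← abs_mul, ← hmean]
  exact abs_integral_le_integral_abs

variable {X : Type*} [MetricSpace X] [ProperSpace X] [MeasurableSpace X] [OpensMeasurableSpace X]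
  {μ : Measure X} [IsFiniteMeasureOnCompacts μ]

theorem Continuous.integrableOn_of_isBounded {f : X → ℝ} (hf : Continuous f) {s : Set X}
    (hs : Bornology.IsBounded s) : IntegrableOn f s μ :=
  (hf.continuousOn.integrableOn_compact hs.isCompact_closure).mono_set subset_closure

theorem iInf_setIntegral_abs_sub_le {u : X → ℝ} (hu : Continuous u) {D s : Set X}
    (hDs : D ⊆ s) (hs : Bornology.IsBounded s) (hs0 : μ s ≠ 0) :
    ⨅ c : ℝ, ∫ y in D, |u y - c| ∂μ ≤
      ∫ z in s, (μ.real s)⁻¹ * ∫ y in s, |u z - u y| ∂μ ∂μ := by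
  have hs_top : μ s ≠ ⊤ := hs.measure_lt_top.ne
  have : IsFiniteMeasure (μ.restrict s) := isFiniteMeasure_restrict.2 hs_top
  set c := ⨍ y in s, u y ∂μ
  have hosc : Continuous fun z => (μ.real s)⁻¹ * ∫ y in s, |u z - u y| ∂μ :=
    continuous_const.mul
      ((lipschitzWith_integral_abs_sub (hu.integrableOn_of_isBounded hs)).continuous.comp hu)
  calc ⨅ c : ℝ, ∫ y in D, |u y - c| ∂μ ≤ ∫ y in D, |u y - c| ∂μ :=
        ciInf_le ⟨0, Set.forall_mem_range.2 fun _ => integral_nonneg fun _ => abs_nonneg _⟩ c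
    _ ≤ ∫ y in s, |u y - c| ∂μ :=
        setIntegral_mono_set ((hu.sub continuous_const).abs.integrableOn_of_isBounded hs)
          (ae_of_all _ fun _ => abs_nonneg _) hDs.eventuallyLE
    _ ≤ ∫ z in s, (μ.real s)⁻¹ * ∫ y in s, |u z - u y| ∂μ ∂μ :=
        integral_mono ((hu.sub continuous_const).abs.integrableOn_of_isBounded hs)
          (hosc.integrableOn_of_isBounded hs)
          fun z => abs_sub_setAverage_le hs0 hs_top (hu.integrableOn_of_isBounded hs) (u z)

end Oscillation

section Weights

theorem Real.rpow_le_one_add_self {x q : ℝ} (hx : 0 ≤ x) (hq₀ : 0 ≤ q) (hq₁ : q ≤ 1) :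
    x ^ q ≤ 1 + x := by
  rcases le_total x 1 with h | h
  · linarith [Real.rpow_le_one hx h hq₀]
  · have : x ^ q ≤ x ^ (1 : ℝ) := Real.rpow_le_rpow_of_exponent_le h hq₁
    rw [Real.rpow_one] at this
    linarith

theorem Integrable.rpow_of_le_one {α : Type*} [MeasurableSpace α] {μ : Measure α}
    [IsFiniteMeasure μ] {f : α → ℝ} (hf : Integrable f μ) (hf₀ : ∀ x, 0 ≤ f x)
    {q : ℝ} (hq₀ : 0 ≤ q) (hq₁ : q ≤ 1) : Integrable (fun x => f x ^ q) μ := by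
  refine ((integrable_const 1).add hf).mono'
    ((measurable_id.pow_const q).comp_aemeasurable hf.aemeasurable).aestronglyMeasurable
    (ae_of_all _ fun x => ?_)
  rw [Real.norm_of_nonneg (Real.rpow_nonneg (hf₀ x) q)]
  exact Real.rpow_le_one_add_self (hf₀ x) hq₀ hq₁

variable {X : Type*} [TopologicalSpace X] [T2Space X] [MeasurableSpace X]
  [OpensMeasurableSpace X] {ν : Measure X} [IsLocallyFiniteMeasure ν]

/- Against the weighted measure `ω dν` the integrand becomes `ω ^ (p + 1) * g`, and
`0 ≤ p + 1 ≤ 1` keeps `ω ^ (p + 1)` locally integrable. -/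
theorem IsCompact.integrableOn_rpow_mul_withDensity {ω : X → ℝ} (hω : ∀ x, 0 < ω x)
    (hωloc : LocallyIntegrable ω ν) {p : ℝ} (hp₀ : -1 ≤ p) (hp₁ : p ≤ 0)
    {g : X → ℝ} (hg : Continuous g) {K : Set X} (hK : IsCompact K) :
    IntegrableOn (fun x => ω x ^ p * g x) K (ν.withDensity fun x => ENNReal.ofReal (ω x)) := by
  have : IsFiniteMeasure (ν.restrict K) := isFiniteMeasure_restrict.2 hK.measure_lt_top.ne
  have hωK : IntegrableOn ω K ν := hωloc.integrableOn_isCompact hK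
  have hint : IntegrableOn (fun x => ω x ^ (p + 1) * g x) K ν :=
    IntegrableOn.mul_continuousOn
      (Integrable.rpow_of_le_one hωK (fun x => (hω x).le) (q := p + 1) (by linarith)
        (by linarith)) hg.continuousOn hK
  rw [IntegrableOn, restrict_withDensity hK.measurableSet,
    integrable_withDensity_iff_integrable_smul₀' hωK.aemeasurable.ennreal_ofReal
      (ae_of_all _ fun _ => ENNReal.ofReal_lt_top)]
  refine hint.congr_fun (fun x _ => ?_) hK.measurableSet
  rw [ENNReal.toReal_ofReal (hω x).le, smul_eq_mul, ← mul_assoc, mul_comm (ω x),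
    ← Real.rpow_add_one (hω x).ne']

end Weights

theorem poincare_inequality_of_strongAinfty_general
    (n : ℕ) (hn : 2 ≤ n)
    (ω : EuclideanSpace ℝ (Fin n) → ℝ) (hω : ∀ x, 0 < ω x)
    (hωloc : LocallyIntegrable ω volume)
    (μ : Measure (EuclideanSpace ℝ (Fin n)))
    (hμ : μ = volume.withDensity fun x => ENNReal.ofReal (ω x))
    (Cd : ℝ) (hCd : 1 ≤ Cd)
    (hdoub : ∀ (x : EuclideanSpace ℝ (Fin n)) (r : ℝ), 0 < r →
      μ (ball x (2 * r)) ≤ ENNReal.ofReal Cd * μ (ball x r))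
    (hpos : ∀ (x : EuclideanSpace ℝ (Fin n)) (r : ℝ), 0 < r → 0 < μ (ball x r))
    (hfin : ∀ (x : EuclideanSpace ℝ (Fin n)) (r : ℝ), 0 < r → μ (ball x r) < ⊤)
    (d : EuclideanSpace ℝ (Fin n) → EuclideanSpace ℝ (Fin n) → ℝ)
    (hd_pos : ∀ x y, x ≠ y → 0 < d x y)
    (C : ℝ) (hC : 1 ≤ C)
    (hcomp : ∀ x y : EuclideanSpace ℝ (Fin n),
      C⁻¹ * (μ (ball x (dist x y))).toReal ≤ d x y ^ n ∧
      d x y ^ n ≤ C * (μ (ball x (dist x y))).toReal)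
    (C₀ : ℝ) (hC₀ : 0 < C₀)
    (hSemmes : ∀ (x : EuclideanSpace ℝ (Fin n)) (r : ℝ), 0 < r →
      ∀ u : EuclideanSpace ℝ (Fin n) → ℝ, ContDiff ℝ 1 u →
      (∫ z in ball x r, (μ (ball x r)).toReal⁻¹ *
          (∫ y in ball x r, |u z - u y| ∂μ) ∂μ) ≤
        C₀ * (μ (ball x r)).toReal ^ ((1 : ℝ) / n) *
          ∫ z in ball x (2 * r), ω z ^ (-(1 : ℝ) / n) * ‖fderiv ℝ u z‖ ∂μ) :
    ∃ C' : ℝ, 0 < C' ∧ ∃ C₂ : ℝ, 1 ≤ C₂ ∧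
      ∀ (x : EuclideanSpace ℝ (Fin n)) (r : ℝ), 0 < r →
      ∀ u : EuclideanSpace ℝ (Fin n) → ℝ, ContDiff ℝ 1 u →
      (⨅ c : ℝ, ∫ y in {y | d x y < r}, |u y - c| ∂μ) ≤
        C' * r * ∫ z in {y | d x y < C₂ * r}, ω z ^ (-(1 : ℝ) / n) * ‖fderiv ℝ u z‖ ∂μ := by
  have : IsLocallyFiniteMeasure μ :=
    ⟨fun x => ⟨ball x 1, ball_mem_nhds x one_pos, hfin x 1 one_pos⟩⟩
  have hn0 : n ≠ 0 := by omega
  have : NeZero n := ⟨hn0⟩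
  have : NullSingletonClass μ := hμ ▸ inferInstance
  refine ⟨C₀ * (Cd ^ 2 * C), by positivity, C ^ 2 * Cd ^ 3 + 1,
    le_add_of_nonneg_left (by positivity), fun x r hr u hu => ?_⟩
  obtain ⟨R, hR, hsub, hsup, hvol⟩ := exists_ball_between_setOf_lt hCd hC hdoub hd_pos hcomp hn0
    x (hpos x 1 one_pos).ne' hr
  have hg_nonneg : ∀ z, 0 ≤ ω z ^ (-(1 : ℝ) / n) * ‖fderiv ℝ u z‖ :=
    fun z => mul_nonneg (Real.rpow_nonneg (hω z).le _) (norm_nonneg _)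
  have hg_int : IntegrableOn (fun z => ω z ^ (-(1 : ℝ) / n) * ‖fderiv ℝ u z‖)
      {y | d x y < (C ^ 2 * Cd ^ 3 + 1) * r} μ := by
    have hexp : -1 ≤ -(1 : ℝ) / n ∧ -(1 : ℝ) / n ≤ 0 := by
      rw [neg_div, neg_le_neg_iff, neg_nonpos]
      exact ⟨div_le_one_of_le₀ (Nat.one_le_cast.2 (by omega)) n.cast_nonneg, by positivity⟩
    have hbdd := isBounded_setOf_lt hdoub ENNReal.ofReal_ne_top hd_pos (fun x y => (hcomp x y).1)
      (by positivity) hn0 x (hpos x 1 one_pos).ne' ((C ^ 2 * Cd ^ 3 + 1) * r)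
    rw [hμ]
    exact (hbdd.isCompact_closure.integrableOn_rpow_mul_withDensity hω hωloc hexp.1 hexp.2
      (hu.continuous_fderiv one_ne_zero).norm).mono_set subset_closure
  calc (⨅ c : ℝ, ∫ y in {y | d x y < r}, |u y - c| ∂μ)
      ≤ ∫ z in ball x R, (μ.real (ball x R))⁻¹ *
          ∫ y in ball x R, |u z - u y| ∂μ ∂μ :=
        iInf_setIntegral_abs_sub_le hu.continuous hsub isBounded_ball (hpos x R hR).ne'
    _ ≤ C₀ * μ.real (ball x R) ^ ((1 : ℝ) / n) *
          ∫ z in ball x (2 * R), ω z ^ (-(1 : ℝ) / n) * ‖fderiv ℝ u z‖ ∂μ :=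
        hSemmes x R hR u hu
    _ ≤ C₀ * (Cd ^ 2 * C * r) * ∫ z in {y | d x y < (C ^ 2 * Cd ^ 3 + 1) * r},
          ω z ^ (-(1 : ℝ) / n) * ‖fderiv ℝ u z‖ ∂μ :=
        mul_le_mul (mul_le_mul_of_nonneg_left hvol hC₀.le)
          (setIntegral_mono_set hg_int (ae_of_all _ fun z => hg_nonneg z) hsup.eventuallyLE)
          (integral_nonneg hg_nonneg) (by positivity)
    _ = C₀ * (Cd ^ 2 * C) * r * ∫ z in {y | d x y < (C ^ 2 * Cd ^ 3 + 1) * r},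
          ω z ^ (-(1 : ℝ) / n) * ‖fderiv ℝ u z‖ ∂μ := by ring

/-- (Proposition 6.7) If in addition the Semmes-type Poincaré inequality holds on
Euclidean balls, then `(ℝⁿ, d, μ)` supports a (1,1)-Poincaré inequality on metric
balls, with constants `C'`, `C₂` independent of the ball and the function. -/
theorem poincare_inequality_of_strongAinfty
    (n : ℕ) (hn : 2 ≤ n)
    (ω : EuclideanSpace ℝ (Fin n) → ℝ) (hω : ∀ x, 0 < ω x)
    (hωloc : LocallyIntegrable ω volume)
    (μ : Measure (EuclideanSpace ℝ (Fin n)))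
    (hμ : μ = volume.withDensity fun x => ENNReal.ofReal (ω x))
    (Cd : ℝ) (hCd : 1 ≤ Cd)
    (hdoub : ∀ (x : EuclideanSpace ℝ (Fin n)) (r : ℝ), 0 < r →
      μ (ball x (2 * r)) ≤ ENNReal.ofReal Cd * μ (ball x r))
    (hpos : ∀ (x : EuclideanSpace ℝ (Fin n)) (r : ℝ), 0 < r → 0 < μ (ball x r))
    (hfin : ∀ (x : EuclideanSpace ℝ (Fin n)) (r : ℝ), 0 < r → μ (ball x r) < ⊤)
    (d : EuclideanSpace ℝ (Fin n) → EuclideanSpace ℝ (Fin n) → ℝ)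
    (hd_self : ∀ x, d x x = 0)
    (hd_pos : ∀ x y, x ≠ y → 0 < d x y)
    (hd_symm : ∀ x y, d x y = d y x)
    (hd_tri : ∀ x y z, d x z ≤ d x y + d y z)
    (hd_top : ∀ (x : EuclideanSpace ℝ (Fin n)), ∀ ε : ℝ, 0 < ε →
      (∃ δ > 0, ∀ y, dist x y < δ → d x y < ε) ∧
      (∃ δ > 0, ∀ y, d x y < δ → dist x y < ε))
    (C : ℝ) (hC : 1 ≤ C)
    (hcomp : ∀ x y : EuclideanSpace ℝ (Fin n),
      C⁻¹ * (μ (ball x (dist x y))).toReal ≤ d x y ^ n ∧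
      d x y ^ n ≤ C * (μ (ball x (dist x y))).toReal)
    (C₀ : ℝ) (hC₀ : 0 < C₀)
    (hSemmes : ∀ (x : EuclideanSpace ℝ (Fin n)) (r : ℝ), 0 < r →
      ∀ u : EuclideanSpace ℝ (Fin n) → ℝ, ContDiff ℝ 1 u →
      (∫ z in ball x r, (μ (ball x r)).toReal⁻¹ *
          (∫ y in ball x r, |u z - u y| ∂μ) ∂μ) ≤
        C₀ * (μ (ball x r)).toReal ^ ((1 : ℝ) / n) *
          ∫ z in ball x (2 * r), ω z ^ (-(1 : ℝ) / n) * ‖fderiv ℝ u z‖ ∂μ) :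
    ∃ C' : ℝ, 0 < C' ∧ ∃ C₂ : ℝ, 1 ≤ C₂ ∧
      ∀ (x : EuclideanSpace ℝ (Fin n)) (r : ℝ), 0 < r →
      ∀ u : EuclideanSpace ℝ (Fin n) → ℝ, ContDiff ℝ 1 u →
      (⨅ c : ℝ, ∫ y in {y | d x y < r}, |u y - c| ∂μ) ≤
        C' * r * ∫ z in {y | d x y < C₂ * r}, ω z ^ (-(1 : ℝ) / n) * ‖fderiv ℝ u z‖ ∂μ :=
  poincare_inequality_of_strongAinfty_general n hn ω hω hωloc μ hμ Cd hCd hdoub hpos hfin d hd_pos C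
    hC hcomp C₀ hC₀ hSemmes
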